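/- Let p, q > 0 and let φ = (φ_1,…,φ_n) be a holomorphic self-map of U^n. Then C_φ maps the little p-Bloch space B^p_0(U^n) boundedly into the little q-Bloch space B^q_0(U^n) if and only if φ^γ = φ_1^{γ_1}···φ_n^{γ_n} belongs to B^q_0(U^n) for every multi-index γ ∈ ℕ^n, and there exists a constant C such that Σ_{k,l=1}^n |∂φ_l/∂z_k(z)| · (1−|z_k|²)^q/(1−|φ_l(z)|²)^p ≤ C for all z ∈ U^n. -/

import Mathlib

open Metric Set Filter

noncomputable section

def polydisc (n : ℕ) : Set (Fin n → ℂ) := {z | ∀ j, ‖z j‖ < 1}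

def blochSum (n : ℕ) (p : ℝ) (f : (Fin n → ℂ) → ℂ) (z : Fin n → ℂ) : ℝ :=
  ∑ k : Fin n, ‖fderiv ℂ f z (Pi.single k 1)‖ * (1 - ‖z k‖ ^ 2) ^ p

def blochNorm (n : ℕ) (p : ℝ) (f : (Fin n → ℂ) → ℂ) : ℝ :=
  ‖f 0‖ + sSup (blochSum n p f '' polydisc n)

def MemBloch (n : ℕ) (p : ℝ) (f : (Fin n → ℂ) → ℂ) : Prop :=
  DifferentiableOn ℂ f (polydisc n) ∧ BddAbove (blochSum n p f '' polydisc n)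

def IsPolyFn (n : ℕ) (g : (Fin n → ℂ) → ℂ) : Prop :=
  ∃ P : MvPolynomial (Fin n) ℂ, ∀ z, g z = MvPolynomial.eval z P

def MemLittleBloch (n : ℕ) (p : ℝ) (f : (Fin n → ℂ) → ℂ) : Prop :=
  MemBloch n p f ∧ ∀ ε : ℝ, 0 < ε →
    ∃ g, IsPolyFn n g ∧ blochNorm n p (fun z => f z - g z) < ε

def MemLittleStarBloch (n : ℕ) (p : ℝ) (f : (Fin n → ℂ) → ℂ) : Prop :=
  MemBloch n p f ∧ ∀ z : ℕ → Fin n → ℂ, (∀ j, z j ∈ polydisc n) →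
    (∀ k, Tendsto (fun j => ‖z j k‖) atTop (nhds 1)) →
    Tendsto (fun j => blochSum n p f (z j)) atTop (nhds 0)

def HoloSelfMap (n : ℕ) (φ : (Fin n → ℂ) → Fin n → ℂ) : Prop :=
  DifferentiableOn ℂ φ (polydisc n) ∧ ∀ z ∈ polydisc n, φ z ∈ polydisc n

def compSum (n : ℕ) (p q : ℝ) (φ : (Fin n → ℂ) → Fin n → ℂ) (z : Fin n → ℂ) : ℝ :=
  ∑ k : Fin n, ∑ l : Fin n, ‖fderiv ℂ φ z (Pi.single k 1) l‖ *
    ((1 - ‖z k‖ ^ 2) ^ q / (1 - ‖φ z l‖ ^ 2) ^ p)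

/-!
If the sum is bounded by `C`, the chain rule together with the pointwise estimate
`|∂f/∂w_l(w)| ≤ ‖f‖_p (1 - |w_l|²)^(-p)` bounds the `q`-Bloch sum of `f ∘ φ` by `‖f‖_p · C`, and
the mean value inequality bounds `|f(φ(0))|`; so `C_φ : B^p → B^q` is bounded. It maps polynomials
into the span of the `φ^γ`, and polynomials are dense in `B^p_0` while `B^q_0` is closed.

Conversely `φ^γ = C_φ(z^γ)`. For the bound, test `C_φ` on `f(w) = m^(p-1) w_l^m`, whose `p`-Bloch
norms are bounded uniformly in `m`. If `|φ_l(z)| = t`, choosing `m ≈ 1/(1-t)` makes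
`m^p t^(m-1) (1-t²)^p` bounded below, and `‖C_φ f‖_q ≤ C ‖f‖_p` becomes a bound on the `l`-th
column of the sum at `z`.
-/

lemma isOpen_polydisc (n : ℕ) : IsOpen (polydisc n) := by
  have : polydisc n = univ.pi fun _ => ball (0 : ℂ) 1 := by ext z; simp [polydisc]
  exact this ▸ isOpen_set_pi finite_univ fun _ _ => isOpen_ball

lemma zero_mem_polydisc (n : ℕ) : (0 : Fin n → ℂ) ∈ polydisc n := fun j => by simp

lemma polydisc_nonempty (n : ℕ) : (polydisc n).Nonempty := ⟨0, zero_mem_polydisc n⟩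

lemma norm_le_one_of_mem_polydisc {n : ℕ} {z : Fin n → ℂ} (hz : z ∈ polydisc n) : ‖z‖ ≤ 1 :=
  (pi_norm_le_iff_of_nonneg zero_le_one).2 fun j => (hz j).le

lemma DifferentiableOn.differentiableAt_of_mem_polydisc {n : ℕ} {E : Type*}
    [NormedAddCommGroup E] [NormedSpace ℂ E] {f : (Fin n → ℂ) → E}
    (hf : DifferentiableOn ℂ f (polydisc n)) {z : Fin n → ℂ} (hz : z ∈ polydisc n) :
    DifferentiableAt ℂ f z :=
  hf.differentiableAt ((isOpen_polydisc n).mem_nhds hz)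

lemma one_sub_norm_sq_pos {x : ℂ} (hx : ‖x‖ < 1) : 0 < 1 - ‖x‖ ^ 2 := by
  nlinarith [norm_nonneg x]

lemma ContinuousLinearMap.apply_eq_sum_single {ι R M : Type*} [Fintype ι] [DecidableEq ι]
    [Semiring R] [TopologicalSpace R] [AddCommMonoid M] [TopologicalSpace M] [Module R M]
    (L : (ι → R) →L[R] M) (v : ι → R) : L v = ∑ i, v i • L (Pi.single i 1) := by
  conv_lhs => rw [← Finset.univ_sum_single v]
  simp only [map_sum, ← map_smul, ← Pi.single_smul', smul_eq_mul, mul_one]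

lemma ContinuousLinearMap.opNorm_le_sum_norm_apply_single {ι 𝕜 E : Type*} [Fintype ι]
    [DecidableEq ι] [NontriviallyNormedField 𝕜] [SeminormedAddCommGroup E] [NormedSpace 𝕜 E]
    (L : (ι → 𝕜) →L[𝕜] E) : ‖L‖ ≤ ∑ i, ‖L (Pi.single i 1)‖ := by
  refine L.opNorm_le_bound (by positivity) fun v => ?_
  calc ‖L v‖ ≤ ∑ i, ‖v i • L (Pi.single i 1)‖ := by
        rw [L.apply_eq_sum_single]; exact norm_sum_le _ _
    _ ≤ ∑ i, ‖L (Pi.single i 1)‖ * ‖v‖ := Finset.sum_le_sum fun i _ => by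
        rw [norm_smul, mul_comm]; gcongr; exact norm_le_pi_norm v i
    _ = _ := (Finset.sum_mul ..).symm

section BlochSum

variable {n : ℕ} {p : ℝ} {f g : (Fin n → ℂ) → ℂ} {z : Fin n → ℂ}

lemma one_sub_norm_sq_rpow_pos (hz : z ∈ polydisc n) (k : Fin n) : 0 < (1 - ‖z k‖ ^ 2) ^ p :=
  Real.rpow_pos_of_pos (one_sub_norm_sq_pos (hz k)) p

lemma blochSum_nonneg (hz : z ∈ polydisc n) : 0 ≤ blochSum n p f z :=
  Finset.sum_nonneg fun k _ => mul_nonneg (norm_nonneg _) (one_sub_norm_sq_rpow_pos hz k).le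

lemma norm_fderiv_single_mul_le_blochSum (hz : z ∈ polydisc n) (k : Fin n) :
    ‖fderiv ℂ f z (Pi.single k 1)‖ * (1 - ‖z k‖ ^ 2) ^ p ≤ blochSum n p f z :=
  Finset.single_le_sum (f := fun k => ‖fderiv ℂ f z (Pi.single k 1)‖ * (1 - ‖z k‖ ^ 2) ^ p)
    (fun j _ => mul_nonneg (norm_nonneg _) (one_sub_norm_sq_rpow_pos hz j).le)
    (Finset.mem_univ k)

lemma blochSum_le_sSup (hf : MemBloch n p f) (hz : z ∈ polydisc n) :
    blochSum n p f z ≤ sSup (blochSum n p f '' polydisc n) :=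
  le_csSup hf.2 (mem_image_of_mem _ hz)

lemma sSup_blochSum_nonneg : 0 ≤ sSup (blochSum n p f '' polydisc n) :=
  Real.sSup_nonneg (forall_mem_image.2 fun _ hz => blochSum_nonneg hz)

lemma sSup_blochSum_le {M : ℝ} (h : ∀ z ∈ polydisc n, blochSum n p f z ≤ M) :
    sSup (blochSum n p f '' polydisc n) ≤ M :=
  csSup_le ((polydisc_nonempty n).image _) (forall_mem_image.2 h)

lemma blochNorm_nonneg : 0 ≤ blochNorm n p f :=
  add_nonneg (norm_nonneg _) sSup_blochSum_nonneg

lemma blochSum_le_blochNorm (hf : MemBloch n p f) (hz : z ∈ polydisc n) :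
    blochSum n p f z ≤ blochNorm n p f :=
  (blochSum_le_sSup hf hz).trans (le_add_of_nonneg_left (norm_nonneg _))

lemma norm_fderiv_single_le (hf : MemBloch n p f) (hz : z ∈ polydisc n) (k : Fin n) :
    ‖fderiv ℂ f z (Pi.single k 1)‖ ≤
      sSup (blochSum n p f '' polydisc n) / (1 - ‖z k‖ ^ 2) ^ p :=
  (le_div_iff₀ (one_sub_norm_sq_rpow_pos hz k)).2
    ((norm_fderiv_single_mul_le_blochSum hz k).trans (blochSum_le_sSup hf hz))

lemma blochNorm_const (c : ℂ) : blochNorm n p (fun _ => c) = ‖c‖ := by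
  have : blochSum n p (fun _ => c) '' polydisc n = {0} := by
    rw [← (polydisc_nonempty n).image_const 0]
    exact image_congr fun z _ => by simp [blochSum]
  simp [blochNorm, this]

lemma MemBloch.of_forall_le (hf : DifferentiableOn ℂ f (polydisc n)) {M : ℝ}
    (h : ∀ z ∈ polydisc n, blochSum n p f z ≤ M) : MemBloch n p f :=
  ⟨hf, M, forall_mem_image.2 h⟩

lemma blochSum_add_le (hf : DifferentiableOn ℂ f (polydisc n))
    (hg : DifferentiableOn ℂ g (polydisc n)) (hz : z ∈ polydisc n) :
    blochSum n p (fun w => f w + g w) z ≤ blochSum n p f z + blochSum n p g z := by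
  simp only [blochSum, ← Finset.sum_add_distrib, ← add_mul]
  refine Finset.sum_le_sum fun k _ => ?_
  rw [fderiv_fun_add (hf.differentiableAt_of_mem_polydisc hz)
    (hg.differentiableAt_of_mem_polydisc hz)]
  gcongr
  · exact (one_sub_norm_sq_rpow_pos hz k).le
  · exact norm_add_le _ _

lemma blochSum_sub_le (hf : DifferentiableOn ℂ f (polydisc n))
    (hg : DifferentiableOn ℂ g (polydisc n)) (hz : z ∈ polydisc n) :
    blochSum n p (fun w => f w - g w) z ≤ blochSum n p f z + blochSum n p g z := by
  simp only [blochSum, ← Finset.sum_add_distrib, ← add_mul]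
  refine Finset.sum_le_sum fun k _ => ?_
  rw [fderiv_fun_sub (hf.differentiableAt_of_mem_polydisc hz)
    (hg.differentiableAt_of_mem_polydisc hz)]
  gcongr
  · exact (one_sub_norm_sq_rpow_pos hz k).le
  · exact norm_sub_le _ _

lemma blochSum_const_mul (c : ℂ) (hf : DifferentiableOn ℂ f (polydisc n))
    (hz : z ∈ polydisc n) : blochSum n p (fun w => c * f w) z = ‖c‖ * blochSum n p f z := by
  simp [blochSum, Finset.mul_sum, fderiv_const_mul (hf.differentiableAt_of_mem_polydisc hz),
    mul_assoc]

lemma MemBloch.add (hf : MemBloch n p f) (hg : MemBloch n p g) :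
    MemBloch n p (fun w => f w + g w) :=
  .of_forall_le (hf.1.add hg.1) fun _ hz =>
    (blochSum_add_le hf.1 hg.1 hz).trans (add_le_add (blochSum_le_sSup hf hz)
      (blochSum_le_sSup hg hz))

lemma MemBloch.sub (hf : MemBloch n p f) (hg : MemBloch n p g) :
    MemBloch n p (fun w => f w - g w) :=
  .of_forall_le (hf.1.sub hg.1) fun _ hz =>
    (blochSum_sub_le hf.1 hg.1 hz).trans (add_le_add (blochSum_le_sSup hf hz)
      (blochSum_le_sSup hg hz))

lemma MemBloch.const_mul (c : ℂ) (hf : MemBloch n p f) : MemBloch n p (fun w => c * f w) :=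
  .of_forall_le (hf.1.const_mul c) fun _ hz => by
    rw [blochSum_const_mul c hf.1 hz]
    exact mul_le_mul_of_nonneg_left (blochSum_le_sSup hf hz) (norm_nonneg c)

lemma blochNorm_add_le (hf : MemBloch n p f) (hg : MemBloch n p g) :
    blochNorm n p (fun w => f w + g w) ≤ blochNorm n p f + blochNorm n p g := by
  have hsup : sSup (blochSum n p (fun w => f w + g w) '' polydisc n) ≤
      sSup (blochSum n p f '' polydisc n) + sSup (blochSum n p g '' polydisc n) :=
    sSup_blochSum_le fun _ hz => (blochSum_add_le hf.1 hg.1 hz).trans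
      (add_le_add (blochSum_le_sSup hf hz) (blochSum_le_sSup hg hz))
  calc blochNorm n p (fun w => f w + g w)
      ≤ (‖f 0‖ + ‖g 0‖) + (sSup (blochSum n p f '' polydisc n) +
          sSup (blochSum n p g '' polydisc n)) := add_le_add (norm_add_le _ _) hsup
    _ = _ := by rw [blochNorm, blochNorm]; ring

open scoped Pointwise in
lemma blochNorm_const_mul (c : ℂ) (hf : DifferentiableOn ℂ f (polydisc n)) :
    blochNorm n p (fun w => c * f w) = ‖c‖ * blochNorm n p f := by
  have : blochSum n p (fun w => c * f w) '' polydisc n = ‖c‖ • (blochSum n p f '' polydisc n) := by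
    rw [← image_smul, image_image]
    exact image_congr fun z hz => blochSum_const_mul c hf hz
  rw [blochNorm, blochNorm, this, Real.sSup_smul_of_nonneg (norm_nonneg c), norm_mul,
    smul_eq_mul, mul_add]

end BlochSum

section Polynomial

variable {n : ℕ} {p : ℝ} {f g : (Fin n → ℂ) → ℂ}

lemma IsPolyFn.contDiff (hg : IsPolyFn n g) : ContDiff ℂ ⊤ g := by
  obtain ⟨P, hP⟩ := hg
  exact funext hP ▸ (AnalyticOnNhd.eval_mvPolynomial P).contDiff

lemma isPolyFn_const (c : ℂ) : IsPolyFn n fun _ => c := ⟨.C c, fun _ => by simp⟩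

lemma IsPolyFn.add (hf : IsPolyFn n f) (hg : IsPolyFn n g) : IsPolyFn n fun z => f z + g z := by
  obtain ⟨P, hP⟩ := hf
  obtain ⟨Q, hQ⟩ := hg
  exact ⟨P + Q, fun z => by simp [hP, hQ]⟩

lemma IsPolyFn.const_mul (c : ℂ) (hg : IsPolyFn n g) : IsPolyFn n fun z => c * g z := by
  obtain ⟨P, hP⟩ := hg
  exact ⟨.C c * P, fun z => by simp [hP]⟩

lemma isPolyFn_prod_pow (γ : Fin n → ℕ) : IsPolyFn n fun z => ∏ l, z l ^ γ l :=
  ⟨∏ l, .X l ^ γ l, fun z => by simp⟩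

lemma ContDiff.memBloch (hp : 0 ≤ p) (hg : ContDiff ℂ 1 g) : MemBloch n p g := by
  obtain ⟨M, hM⟩ := (isCompact_closedBall (0 : Fin n → ℂ) 1).exists_bound_of_continuousOn
    (hg.continuous_fderiv one_ne_zero).continuousOn
  refine .of_forall_le (hg.differentiable one_ne_zero).differentiableOn (M := n * M)
    fun z hz => ?_
  have hzM : ‖fderiv ℂ g z‖ ≤ M := hM z (mem_closedBall_zero_iff.2 (norm_le_one_of_mem_polydisc hz))
  calc blochSum n p g z ≤ ∑ _k : Fin n, M := Finset.sum_le_sum fun k _ => by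
        calc ‖fderiv ℂ g z (Pi.single k 1)‖ * (1 - ‖z k‖ ^ 2) ^ p
            ≤ (‖fderiv ℂ g z‖ * ‖(Pi.single k 1 : Fin n → ℂ)‖) * 1 := by
              gcongr
              · exact (one_sub_norm_sq_rpow_pos hz k).le
              · exact (fderiv ℂ g z).le_opNorm _
              · exact Real.rpow_le_one (one_sub_norm_sq_pos (hz k)).le
                  (by nlinarith [norm_nonneg (z k)]) hp
          _ ≤ M := by simpa [Pi.norm_single] using hzM
    _ = n * M := by simp

lemma IsPolyFn.memBloch (hp : 0 ≤ p) (hg : IsPolyFn n g) : MemBloch n p g :=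
  hg.contDiff.of_le le_top |>.memBloch hp

lemma IsPolyFn.memLittleBloch (hp : 0 ≤ p) (hg : IsPolyFn n g) : MemLittleBloch n p g :=
  ⟨hg.memBloch hp, fun ε hε => ⟨g, hg, by simpa [blochNorm_const] using hε⟩⟩

end Polynomial

section LittleBloch

variable {n : ℕ} {p : ℝ} {f g h : (Fin n → ℂ) → ℂ}

lemma MemLittleBloch.add (hp : 0 ≤ p) (hf : MemLittleBloch n p f) (hg : MemLittleBloch n p g) :
    MemLittleBloch n p fun z => f z + g z := by
  refine ⟨hf.1.add hg.1, fun ε hε => ?_⟩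
  obtain ⟨u, hu, hfu⟩ := hf.2 (ε / 2) (by positivity)
  obtain ⟨v, hv, hgv⟩ := hg.2 (ε / 2) (by positivity)
  refine ⟨fun z => u z + v z, hu.add hv, ?_⟩
  calc blochNorm n p (fun z => f z + g z - (u z + v z))
      = blochNorm n p (fun z => (f z - u z) + (g z - v z)) := by congr; ext; ring
    _ ≤ blochNorm n p (fun z => f z - u z) + blochNorm n p (fun z => g z - v z) :=
        blochNorm_add_le (hf.1.sub (hu.memBloch hp)) (hg.1.sub (hv.memBloch hp))
    _ < ε := by linarith

lemma MemLittleBloch.const_mul (hp : 0 ≤ p) (c : ℂ) (hf : MemLittleBloch n p f) :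
    MemLittleBloch n p fun z => c * f z := by
  refine ⟨hf.1.const_mul c, fun ε hε => ?_⟩
  obtain ⟨u, hu, hfu⟩ := hf.2 (ε / (‖c‖ + 1)) (by positivity)
  refine ⟨fun z => c * u z, hu.const_mul c, ?_⟩
  calc blochNorm n p (fun z => c * f z - c * u z)
      = ‖c‖ * blochNorm n p (fun z => f z - u z) := by
        rw [← blochNorm_const_mul c (hf.1.sub (hu.memBloch hp)).1]; congr; ext; ring
    _ ≤ (‖c‖ + 1) * blochNorm n p (fun z => f z - u z) := by
        gcongr
        · exact blochNorm_nonneg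
        · linarith
    _ < (‖c‖ + 1) * (ε / (‖c‖ + 1)) := by gcongr
    _ = ε := by field_simp

def littleBlochSubmodule (n : ℕ) {p : ℝ} (hp : 0 ≤ p) : Submodule ℂ ((Fin n → ℂ) → ℂ) where
  carrier := {f | MemLittleBloch n p f}
  add_mem' := MemLittleBloch.add hp
  zero_mem' := (isPolyFn_const 0).memLittleBloch hp
  smul_mem' c _ hf := hf.const_mul hp c

lemma memLittleBloch_of_approx (hp : 0 ≤ p) (hh : MemBloch n p h)
    (H : ∀ ε > 0, ∃ g, MemLittleBloch n p g ∧ blochNorm n p (fun z => h z - g z) < ε) :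
    MemLittleBloch n p h := by
  refine ⟨hh, fun ε hε => ?_⟩
  obtain ⟨g, hg, hhg⟩ := H (ε / 2) (by positivity)
  obtain ⟨v, hv, hgv⟩ := hg.2 (ε / 2) (by positivity)
  refine ⟨v, hv, ?_⟩
  calc blochNorm n p (fun z => h z - v z)
      = blochNorm n p (fun z => (h z - g z) + (g z - v z)) := by congr; ext; ring
    _ ≤ blochNorm n p (fun z => h z - g z) + blochNorm n p (fun z => g z - v z) :=
        blochNorm_add_le (hh.sub hg.1) (hg.1.sub (hv.memBloch hp))
    _ < ε := by linarith

end LittleBloch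

section Composition

variable {n : ℕ} {p q : ℝ} {f : (Fin n → ℂ) → ℂ} {φ : (Fin n → ℂ) → Fin n → ℂ}
  {z w : Fin n → ℂ}

lemma blochSum_comp_eq {ψ : (Fin n → ℂ) → ℂ} {h : ℂ → ℂ} (hh : DifferentiableAt ℂ h (ψ z))
    (hψ : DifferentiableAt ℂ ψ z) :
    blochSum n p (fun w => h (ψ w)) z = ‖deriv h (ψ z)‖ * blochSum n p ψ z := by
  rw [blochSum, blochSum, Finset.mul_sum, show (fun w => h (ψ w)) = h ∘ ψ from rfl,
    (hh.hasDerivAt.comp_hasFDerivAt z hψ.hasFDerivAt).fderiv]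
  simp [mul_assoc]

lemma blochSum_apply (l : Fin n) (z : Fin n → ℂ) :
    blochSum n p (fun w => w l) z = (1 - ‖z l‖ ^ 2) ^ p := by
  simp [blochSum, (hasFDerivAt_apply l z).fderiv, Pi.single_apply, apply_ite]

lemma compSum_eq_sum_blochSum (hφ : DifferentiableAt ℂ φ z) :
    compSum n p q φ z = ∑ l, blochSum n q (fun w => φ w l) z / (1 - ‖φ z l‖ ^ 2) ^ p := by
  simp only [compSum, blochSum, fderiv_apply hφ, ContinuousLinearMap.comp_apply,
    ContinuousLinearMap.proj_apply, Finset.sum_div, mul_div_assoc]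
  exact Finset.sum_comm

lemma compSum_nonneg (hφ : HoloSelfMap n φ) (hz : z ∈ polydisc n) : 0 ≤ compSum n p q φ z :=
  Finset.sum_nonneg fun k _ => Finset.sum_nonneg fun l _ => mul_nonneg (norm_nonneg _)
    (div_nonneg (one_sub_norm_sq_rpow_pos hz k).le (one_sub_norm_sq_rpow_pos (hφ.2 z hz) l).le)

lemma blochSum_comp_le (hφ : HoloSelfMap n φ) (hf : MemBloch n p f) (hz : z ∈ polydisc n) :
    blochSum n q (fun w => f (φ w)) z ≤
      sSup (blochSum n p f '' polydisc n) * compSum n p q φ z := by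
  set S := sSup (blochSum n p f '' polydisc n)
  have hφz := hφ.2 z hz
  rw [blochSum, compSum, Finset.mul_sum, fderiv_fun_comp z
    (hf.1.differentiableAt_of_mem_polydisc hφz) (hφ.1.differentiableAt_of_mem_polydisc hz)]
  refine Finset.sum_le_sum fun k _ => ?_
  rw [ContinuousLinearMap.comp_apply, ContinuousLinearMap.apply_eq_sum_single, Finset.mul_sum]
  have hzk := (one_sub_norm_sq_rpow_pos (p := q) hz k).le
  calc ‖∑ l, fderiv ℂ φ z (Pi.single k 1) l • fderiv ℂ f (φ z) (Pi.single l 1)‖ *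
        (1 - ‖z k‖ ^ 2) ^ q
      ≤ ∑ l, ‖fderiv ℂ φ z (Pi.single k 1) l‖ * ‖fderiv ℂ f (φ z) (Pi.single l 1)‖ *
          (1 - ‖z k‖ ^ 2) ^ q := by
        simp only [← Finset.sum_mul, ← norm_smul]
        gcongr
        exact norm_sum_le _ _
    _ ≤ ∑ l, ‖fderiv ℂ φ z (Pi.single k 1) l‖ * (S / (1 - ‖φ z l‖ ^ 2) ^ p) *
          (1 - ‖z k‖ ^ 2) ^ q := by
        gcongr with l
        exact norm_fderiv_single_le hf hφz l
    _ = _ := Finset.sum_congr rfl fun l _ => by ring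

lemma MemBloch.comp (hφ : HoloSelfMap n φ) (hf : MemBloch n p f) {C : ℝ}
    (hC : ∀ z ∈ polydisc n, compSum n p q φ z ≤ C) : MemBloch n q fun z => f (φ z) :=
  .of_forall_le (hf.1.comp hφ.1 hφ.2) fun z hz => (blochSum_comp_le hφ hf hz).trans
    (mul_le_mul_of_nonneg_left (hC z hz) sSup_blochSum_nonneg)

lemma MemBloch.norm_sub_apply_zero_le (hp : 0 ≤ p) (hf : MemBloch n p f) (hw : w ∈ polydisc n) :
    ‖f w - f 0‖ ≤ sSup (blochSum n p f '' polydisc n) * ∑ k, ((1 - ‖w k‖ ^ 2) ^ p)⁻¹ := by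
  set S := sSup (blochSum n p f '' polydisc n)
  set K := ∑ k, ((1 - ‖w k‖ ^ 2) ^ p)⁻¹
  set box := univ.pi fun k => closedBall (0 : ℂ) ‖w k‖
  have hbox : ∀ x ∈ box, x ∈ polydisc n ∧ ∀ k, ‖x k‖ ≤ ‖w k‖ := fun x hx =>
    have hle : ∀ k, ‖x k‖ ≤ ‖w k‖ := fun k => mem_closedBall_zero_iff.1 (hx k (mem_univ k))
    ⟨fun k => (hle k).trans_lt (hw k), hle⟩
  have hderiv : ∀ x ∈ box, ‖fderiv ℂ f x‖ ≤ S * K := fun x hx => by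
    obtain ⟨hx, hxw⟩ := hbox x hx
    refine (fderiv ℂ f x).opNorm_le_sum_norm_apply_single.trans ?_
    rw [Finset.mul_sum]
    refine Finset.sum_le_sum fun k _ => (norm_fderiv_single_le hf hx k).trans ?_
    rw [← div_eq_mul_inv]
    gcongr
    · exact sSup_blochSum_nonneg
    · exact one_sub_norm_sq_rpow_pos hw k
    · exact (one_sub_norm_sq_pos (hw k)).le
    · exact hxw k
  have h0 : (0 : Fin n → ℂ) ∈ box := by simp [box]
  have hwbox : w ∈ box := by simp [box]
  calc ‖f w - f 0‖ ≤ S * K * ‖w - 0‖ :=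
        Convex.norm_image_sub_le_of_norm_fderiv_le
          (fun x hx => hf.1.differentiableAt_of_mem_polydisc (hbox x hx).1) hderiv
          (convex_pi fun k _ => convex_closedBall 0 _) h0 hwbox
    _ ≤ S * K := by
        rw [sub_zero]
        refine mul_le_of_le_one_right (mul_nonneg sSup_blochSum_nonneg ?_)
          (norm_le_one_of_mem_polydisc hw)
        exact Finset.sum_nonneg fun k _ => (inv_pos.2 (one_sub_norm_sq_rpow_pos hw k)).le

end Composition

section Sufficiency

variable {n : ℕ} {p q : ℝ} {φ : (Fin n → ℂ) → Fin n → ℂ}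

lemma exists_blochNorm_comp_le (hp : 0 ≤ p) (hφ : HoloSelfMap n φ) {C : ℝ}
    (hC : ∀ z ∈ polydisc n, compSum n p q φ z ≤ C) :
    ∃ C' > 0, ∀ f, MemBloch n p f → blochNorm n q (fun z => f (φ z)) ≤ C' * blochNorm n p f := by
  have hφ0 := hφ.2 0 (zero_mem_polydisc n)
  set K := ∑ k, ((1 - ‖φ 0 k‖ ^ 2) ^ p)⁻¹
  have hK : 0 ≤ K := Finset.sum_nonneg fun k _ => (inv_pos.2 (one_sub_norm_sq_rpow_pos hφ0 k)).le
  have hC0 : 0 ≤ C := (compSum_nonneg hφ (zero_mem_polydisc n)).trans (hC 0 (zero_mem_polydisc n))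
  refine ⟨1 + K + C, by positivity, fun f hf => ?_⟩
  set S := sSup (blochSum n p f '' polydisc n)
  have hS : 0 ≤ S := sSup_blochSum_nonneg
  have hval : ‖f (φ 0)‖ ≤ ‖f 0‖ + S * K := by
    have := hf.norm_sub_apply_zero_le hp hφ0
    linarith [norm_le_norm_add_norm_sub' (f (φ 0)) (f 0)]
  have hsup : sSup (blochSum n q (fun z => f (φ z)) '' polydisc n) ≤ S * C :=
    sSup_blochSum_le fun z hz => (blochSum_comp_le hφ hf hz).trans
      (mul_le_mul_of_nonneg_left (hC z hz) hS)
  rw [blochNorm, blochNorm]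
  nlinarith [norm_nonneg (f 0)]

lemma IsPolyFn.memLittleBloch_comp (hq : 0 ≤ q)
    (hγ : ∀ γ : Fin n → ℕ, MemLittleBloch n q fun z => ∏ l, φ z l ^ γ l)
    {g : (Fin n → ℂ) → ℂ} (hg : IsPolyFn n g) : MemLittleBloch n q fun z => g (φ z) := by
  obtain ⟨P, hP⟩ := hg
  simp only [hP, MvPolynomial.eval_eq', ← Finset.sum_fn]
  exact (littleBlochSubmodule n hq).sum_mem fun d _ => (hγ d).const_mul hq _

lemma MemLittleBloch.comp (hp : 0 ≤ p) (hq : 0 ≤ q) (hφ : HoloSelfMap n φ)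
    (hγ : ∀ γ : Fin n → ℕ, MemLittleBloch n q fun z => ∏ l, φ z l ^ γ l) {C : ℝ}
    (hC : ∀ z ∈ polydisc n, compSum n p q φ z ≤ C) {f : (Fin n → ℂ) → ℂ}
    (hf : MemLittleBloch n p f) : MemLittleBloch n q fun z => f (φ z) := by
  obtain ⟨C', hC', hbound⟩ := exists_blochNorm_comp_le hp hφ hC
  refine memLittleBloch_of_approx hq (hf.1.comp hφ hC) fun ε hε => ?_
  obtain ⟨u, hu, hfu⟩ := hf.2 (ε / C') (by positivity)
  refine ⟨fun z => u (φ z), hu.memLittleBloch_comp hq hγ, ?_⟩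
  calc blochNorm n q (fun z => f (φ z) - u (φ z))
      ≤ C' * blochNorm n p (fun z => f z - u z) := hbound _ (hf.1.sub (hu.memBloch hp))
    _ < C' * (ε / C') := by gcongr
    _ = ε := by field_simp

end Sufficiency

section TestFunctions

open Real

variable {p : ℝ}

def powWeight (p : ℝ) (m : ℕ) (t : ℝ) : ℝ := (m : ℝ) ^ p * t ^ (m - 1) * (1 - t ^ 2) ^ p

lemma rpow_mul_exp_neg_half_le (hp : 0 < p) {u : ℝ} (hu : 0 ≤ u) :
    u ^ p * exp (-(u / 2)) ≤ (2 * p) ^ p * exp (-p) := by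
  rcases hu.eq_or_lt with rfl | hu
  · rw [zero_rpow hp.ne', zero_mul]; positivity
  have hlog : log u ≤ log (2 * p) + u / (2 * p) - 1 := by
    have := log_le_sub_one_of_pos (x := u / (2 * p)) (by positivity)
    rw [log_div hu.ne' (by positivity)] at this
    linarith
  have hexp : log u * p - u / 2 ≤ log (2 * p) * p - p := by
    have := mul_le_mul_of_nonneg_right hlog hp.le
    have : u / (2 * p) * p = u / 2 := by field_simp
    nlinarith
  calc u ^ p * exp (-(u / 2)) = exp (log u * p - u / 2) := by
        rw [rpow_def_of_pos hu, ← exp_add]; ring_nf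
    _ ≤ exp (log (2 * p) * p - p) := exp_le_exp.2 hexp
    _ = (2 * p) ^ p * exp (-p) := by
        rw [rpow_def_of_pos (by positivity), ← exp_add]; ring_nf

lemma pow_le_exp_neg_mul {t : ℝ} (ht : 0 ≤ t) (j : ℕ) : t ^ j ≤ exp (-((1 - t) * j)) := by
  calc t ^ j ≤ exp (t - 1) ^ j := by gcongr; linarith [add_one_le_exp (t - 1)]
    _ = exp (-((1 - t) * j)) := by rw [← exp_nat_mul]; ring_nf

lemma exists_powWeight_le (hp : 0 < p) :
    ∃ B, ∀ m, 1 ≤ m → ∀ t, 0 ≤ t → t < 1 → powWeight p m t ≤ B := by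
  refine ⟨1 + 2 ^ p * ((2 * p) ^ p * exp (-p)), fun m hm t ht0 ht1 => ?_⟩
  have h1t : 0 < 1 - t := by linarith
  obtain rfl | hm2 : m = 1 ∨ 2 ≤ m := by omega
  · have : (1 - t ^ 2) ^ p ≤ 1 := rpow_le_one (by nlinarith) (by nlinarith) hp.le
    simp only [powWeight, Nat.cast_one, one_rpow, one_mul, Nat.sub_self, pow_zero]
    linarith [show 0 ≤ 2 ^ p * ((2 * p) ^ p * exp (-p)) by positivity]
  set u := m * (1 - t)
  have hsq : (1 - t ^ 2) ^ p ≤ 2 ^ p * (1 - t) ^ p := by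
    rw [← mul_rpow (by norm_num) h1t.le]
    gcongr
    · nlinarith
    · nlinarith
  have hm2' : (2 : ℝ) ≤ m := by exact_mod_cast hm2
  have hexp : t ^ (m - 1) ≤ exp (-(u / 2)) := by
    refine (pow_le_exp_neg_mul ht0 _).trans (exp_le_exp.2 ?_)
    rw [Nat.cast_sub hm]
    nlinarith
  calc powWeight p m t ≤ m ^ p * t ^ (m - 1) * (2 ^ p * (1 - t) ^ p) := by
        unfold powWeight; gcongr
    _ = 2 ^ p * (u ^ p * t ^ (m - 1)) := by rw [mul_rpow (by positivity) h1t.le]; ring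
    _ ≤ 2 ^ p * (u ^ p * exp (-(u / 2))) := by gcongr
    _ ≤ 2 ^ p * ((2 * p) ^ p * exp (-p)) :=
        mul_le_mul_of_nonneg_left (rpow_mul_exp_neg_half_le hp (by positivity)) (by positivity)
    _ ≤ _ := le_add_of_nonneg_left zero_le_one

lemma exists_le_powWeight (hp : 0 < p) {t : ℝ} (ht0 : 0 ≤ t) (ht1 : t < 1) :
    ∃ m, 1 ≤ m ∧ exp (-2) * (3 / 4) ^ p ≤ powWeight p m t := by
  rcases le_or_gt t (1 / 2) with ht | ht
  · refine ⟨1, le_rfl, ?_⟩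
    have hexp : exp (-2) ≤ 1 := exp_le_one_iff.2 (by norm_num)
    simp only [powWeight, Nat.cast_one, one_rpow, one_mul, Nat.sub_self, pow_zero]
    calc exp (-2) * (3 / 4) ^ p ≤ 1 * (3 / 4) ^ p := by gcongr
      _ ≤ (1 - t ^ 2) ^ p := by rw [one_mul]; gcongr; nlinarith
  have h1t : 0 < 1 - t := by linarith
  set m := ⌈(1 - t)⁻¹⌉₊
  have hm : 1 ≤ m := Nat.one_le_ceil_iff.2 (by positivity)
  have hmu : 1 ≤ m * (1 - t) := by
    have := Nat.le_ceil (1 - t)⁻¹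
    rwa [inv_le_iff_one_le_mul₀ h1t] at this
  have hm1 : ((m - 1 : ℕ) : ℝ) * (1 - t) ≤ 1 := by
    have := Nat.ceil_lt_add_one (inv_nonneg.2 h1t.le)
    calc ((m - 1 : ℕ) : ℝ) * (1 - t) ≤ (1 - t)⁻¹ * (1 - t) := by
          rw [Nat.cast_sub hm, Nat.cast_one]; gcongr; linarith
      _ = 1 := inv_mul_cancel₀ h1t.ne'
  have hpow : exp (-2) ≤ t ^ (m - 1) := by
    have hlog : -(2 * (1 - t)) ≤ log t := by
      refine le_trans ?_ (one_sub_inv_le_log_of_pos (by linarith))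
      have ht2 : t⁻¹ ≤ 2 := by rw [inv_le_comm₀ (by linarith) (by norm_num)]; linarith
      have : 1 - t⁻¹ = -((1 - t) * t⁻¹) := by
        rw [sub_mul, one_mul, mul_inv_cancel₀ (by linarith)]; ring
      rw [this, neg_le_neg_iff, mul_comm 2]
      gcongr
    rw [← exp_log (by linarith : 0 < t), ← exp_nat_mul]
    gcongr
    nlinarith [(Nat.cast_nonneg (m - 1) : (0 : ℝ) ≤ _)]
  refine ⟨m, hm, ?_⟩
  calc exp (-2) * (3 / 4) ^ p ≤ t ^ (m - 1) * 1 :=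
        mul_le_mul hpow (rpow_le_one (by norm_num) (by norm_num) hp.le) (by positivity)
          (by positivity)
    _ ≤ t ^ (m - 1) * (m * (1 - t)) ^ p := by gcongr; exact one_le_rpow hmu hp.le
    _ = m ^ p * t ^ (m - 1) * (1 - t) ^ p := by rw [mul_rpow (by positivity) h1t.le]; ring
    _ ≤ powWeight p m t := by unfold powWeight; gcongr; nlinarith

end TestFunctions

section Necessity

variable {n : ℕ} {p q : ℝ} {m : ℕ} {φ : (Fin n → ℂ) → Fin n → ℂ} {z : Fin n → ℂ}

/-- The normalisation makes the `p`-Bloch sum of `w ↦ scaledPow p m (w l)` at `w` equal to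
`powWeight p m ‖w l‖`, which is bounded uniformly in `m`. -/
def scaledPow (p : ℝ) (m : ℕ) (x : ℂ) : ℂ := ((m : ℝ) ^ (p - 1) : ℝ) * x ^ m

lemma hasDerivAt_scaledPow (x : ℂ) :
    HasDerivAt (scaledPow p m) (((m : ℝ) ^ (p - 1) : ℝ) * (m * x ^ (m - 1))) x :=
  (hasDerivAt_pow m x).const_mul _

lemma norm_deriv_scaledPow (hm : 1 ≤ m) (x : ℂ) :
    ‖deriv (scaledPow p m) x‖ = (m : ℝ) ^ p * ‖x‖ ^ (m - 1) := by
  have hm0 : (0 : ℝ) < m := by exact_mod_cast hm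
  rw [(hasDerivAt_scaledPow x).deriv, norm_mul, norm_mul, norm_pow, Complex.norm_natCast,
    Complex.norm_real, Real.norm_of_nonneg (by positivity), Real.rpow_sub_one hm0.ne']
  field_simp

lemma blochSum_scaledPow_comp (hm : 1 ≤ m) {ψ : (Fin n → ℂ) → ℂ} (hψ : DifferentiableAt ℂ ψ z) :
    blochSum n q (fun w => scaledPow p m (ψ w)) z =
      (m : ℝ) ^ p * ‖ψ z‖ ^ (m - 1) * blochSum n q ψ z := by
  rw [blochSum_comp_eq (hasDerivAt_scaledPow _).differentiableAt hψ, norm_deriv_scaledPow hm]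

lemma isPolyFn_scaledPow_apply (l : Fin n) : IsPolyFn n fun w => scaledPow p m (w l) :=
  ⟨.C ((m : ℝ) ^ (p - 1) : ℝ) * .X l ^ m, fun w => by simp [scaledPow]⟩

lemma blochNorm_scaledPow_apply_le (hm : 1 ≤ m) {B : ℝ}
    (hB : ∀ t, 0 ≤ t → t < 1 → powWeight p m t ≤ B) (l : Fin n) :
    blochNorm n p (fun w => scaledPow p m (w l)) ≤ B := by
  have h0 : scaledPow p m 0 = 0 := by simp [scaledPow, zero_pow (by omega : m ≠ 0)]
  simp only [blochNorm, Pi.zero_apply, h0, norm_zero, zero_add]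
  refine sSup_blochSum_le fun w hw => ?_
  rw [blochSum_scaledPow_comp hm (hasFDerivAt_apply l w).differentiableAt, blochSum_apply]
  exact hB _ (norm_nonneg _) (hw l)

lemma blochSum_apply_comp_div_le (hp : 0 < p) (hφ : HoloSelfMap n φ) {C B : ℝ} (hC : 0 ≤ C)
    (hmap : ∀ f, MemLittleBloch n p f → MemLittleBloch n q fun z => f (φ z))
    (hbd : ∀ f, MemLittleBloch n p f → blochNorm n q (fun z => f (φ z)) ≤ C * blochNorm n p f)
    (hB : ∀ m, 1 ≤ m → ∀ t, 0 ≤ t → t < 1 → powWeight p m t ≤ B) (hz : z ∈ polydisc n)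
    (l : Fin n) :
    blochSum n q (fun w => φ w l) z / (1 - ‖φ z l‖ ^ 2) ^ p ≤
      C * B / (Real.exp (-2) * (3 / 4) ^ p) := by
  set t := ‖φ z l‖
  set β := blochSum n q (fun w => φ w l) z
  have hβ : 0 ≤ β := blochSum_nonneg hz
  obtain ⟨m, hm, hlow⟩ := exists_le_powWeight hp (norm_nonneg _) (hφ.2 z hz l)
  set f := fun w : Fin n → ℂ => scaledPow p m (w l)
  have hf : MemLittleBloch n p f := (isPolyFn_scaledPow_apply l).memLittleBloch hp.le
  have htest : (m : ℝ) ^ p * t ^ (m - 1) * β ≤ C * B := calc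
    _ = blochSum n q (fun w => f (φ w)) z := (blochSum_scaledPow_comp hm
        (differentiableAt_pi.1 (hφ.1.differentiableAt_of_mem_polydisc hz) l)).symm
    _ ≤ blochNorm n q (fun w => f (φ w)) := blochSum_le_blochNorm (hmap f hf).1 hz
    _ ≤ C * blochNorm n p f := hbd f hf
    _ ≤ C * B := by gcongr; exact blochNorm_scaledPow_apply_le hm (hB m hm) l
  rw [div_le_div_iff₀ (one_sub_norm_sq_rpow_pos (hφ.2 z hz) l) (by positivity)]
  calc β * (Real.exp (-2) * (3 / 4) ^ p) ≤ β * powWeight p m t := by gcongr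
    _ = (m ^ p * t ^ (m - 1) * β) * (1 - t ^ 2) ^ p := by unfold powWeight; ring
    _ ≤ C * B * (1 - t ^ 2) ^ p := by
        gcongr
        exact (one_sub_norm_sq_rpow_pos (hφ.2 z hz) l).le

lemma exists_compSum_le (hp : 0 < p) (hφ : HoloSelfMap n φ)
    (hmap : ∀ f, MemLittleBloch n p f → MemLittleBloch n q fun z => f (φ z)) {C : ℝ}
    (hbd : ∀ f, MemLittleBloch n p f → blochNorm n q (fun z => f (φ z)) ≤ C * blochNorm n p f) :
    ∃ C', ∀ z ∈ polydisc n, compSum n p q φ z ≤ C' := by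
  obtain ⟨B, hB⟩ := exists_powWeight_le hp
  have hC : 0 ≤ C := by
    have := hbd _ ((isPolyFn_const 1).memLittleBloch hp.le)
    simp only [blochNorm_const, norm_one, mul_one] at this
    linarith
  refine ⟨n * (C * B / (Real.exp (-2) * (3 / 4) ^ p)), fun z hz => ?_⟩
  rw [compSum_eq_sum_blochSum (hφ.1.differentiableAt_of_mem_polydisc hz)]
  calc _ ≤ ∑ _l : Fin n, C * B / (Real.exp (-2) * (3 / 4) ^ p) :=
        Finset.sum_le_sum fun l _ => blochSum_apply_comp_div_le hp hφ hC hmap hbd hB hz l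
    _ = _ := by simp

end Necessity

/-- Lemma 5: boundedness of C_φ between little Bloch spaces. -/
theorem comp_bounded_little_iff (n : ℕ) (p q : ℝ) (hp : 0 < p) (hq : 0 < q)
    (φ : (Fin n → ℂ) → Fin n → ℂ) (hφ : HoloSelfMap n φ) :
    ((∀ f, MemLittleBloch n p f → MemLittleBloch n q (fun z => f (φ z))) ∧
      ∃ C : ℝ, ∀ f, MemLittleBloch n p f →
        blochNorm n q (fun z => f (φ z)) ≤ C * blochNorm n p f) ↔
    ((∀ γ : Fin n → ℕ, MemLittleBloch n q (fun z => ∏ l : Fin n, φ z l ^ γ l)) ∧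
      ∃ C : ℝ, ∀ z ∈ polydisc n, compSum n p q φ z ≤ C) := by
  constructor
  · rintro ⟨hmap, C, hbd⟩
    exact ⟨fun γ => hmap _ ((isPolyFn_prod_pow γ).memLittleBloch hp.le),
      exists_compSum_le hp hφ hmap hbd⟩
  · rintro ⟨hγ, C, hC⟩
    obtain ⟨C', -, hbound⟩ := exists_blochNorm_comp_le hp.le hφ hC
    exact ⟨fun f hf => hf.comp hp.le hq.le hφ hγ hC, C', fun f hf => hbound f hf.1⟩
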